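/- arXiv:2602.00926 — 5 statements merged into one kernel-verified Lean document; each statement's English description precedes it below -/
import Mathlib

section
/- Let a bounded sequence u : ℤ → ℝ^m be such that there exists a remotely almost periodic function f : ℝ → ℝ^m with f(n) = u(n) for all n ∈ ℤ. Then u is a remotely almost periodic sequence, i.e., for every ε > 0 the set of τ ∈ ℤ with limsup_{|n|→∞} ‖u(n+τ) − u(n)‖ < ε is relatively dense in ℤ. -/
open Filter

/-- A set of reals is relatively dense. -/
def RelDenseR (S : Set ℝ) : Prop := ∃ L > 0, ∀ x : ℝ, ∃ τ ∈ S, |τ - x| ≤ L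

/-- A set of integers is relatively dense. -/
def RelDenseZ (S : Set ℤ) : Prop := ∃ L : ℤ, 0 < L ∧ ∀ x : ℤ, ∃ τ ∈ S, |τ - x| ≤ L

/-- Remotely almost periodic function `ℝ → ℝ^m`. -/
def RAPfun {m : ℕ} (f : ℝ → EuclideanSpace ℝ (Fin m)) : Prop :=
  (∃ M, ∀ t, ‖f t‖ ≤ M) ∧ UniformContinuous f ∧
  ∀ ε > 0, RelDenseR {τ : ℝ |
    limsup (fun t => ‖f (t + τ) - f t‖) (cocompact ℝ) < ε}

/-- Remotely almost periodic sequence `ℤ → ℝ^m`. -/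
def RAPseq {m : ℕ} (u : ℤ → EuclideanSpace ℝ (Fin m)) : Prop :=
  (∃ M, ∀ n, ‖u n‖ ≤ M) ∧
  ∀ ε > 0, RelDenseZ {τ : ℤ |
    limsup (fun n => ‖u (n + τ) - u n‖) (cocompact ℤ) < ε}

/-- Shifting the variable does not change the limsup along `cocompact ℝ`. -/
lemma limsup_shift (g : ℝ → ℝ) (c : ℝ) :
    limsup (fun t => g (t + c)) (cocompact ℝ) = limsup g (cocompact ℝ) := by
  have h : (fun t => g (t + c)) = g ∘ (Homeomorph.addRight c) := rfl
  rw [h, limsup_comp, (Homeomorph.addRight c).map_cocompact]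

/-- a bounded sequence which is the restriction of a remotely almost
periodic function to the integers is a remotely almost periodic sequence. -/
theorem stmt0 {m : ℕ} (u : ℤ → EuclideanSpace ℝ (Fin m))
    (hu : ∃ M, ∀ n, ‖u n‖ ≤ M)
    (f : ℝ → EuclideanSpace ℝ (Fin m)) (hf : RAPfun f)
    (hfu : ∀ n : ℤ, f n = u n) :
    RAPseq u := by
  classical
  obtain ⟨⟨M, hM⟩, hUC, hRAP⟩ := hf
  -- notation for the limsup quantity
  set G : ℝ → ℝ := fun c => limsup (fun t => ‖f (t + c) - f t‖) (cocompact ℝ) with hGdef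
  -- boundedness facts
  have hbd : ∀ c : ℝ, ∀ t : ℝ, ‖f (t + c) - f t‖ ≤ M + M := fun c t =>
    (norm_sub_le _ _).trans (add_le_add (hM _) (hM _))
  have bd : ∀ c : ℝ, IsBoundedUnder (· ≤ ·) (cocompact ℝ) (fun t => ‖f (t + c) - f t‖) :=
    fun c => isBoundedUnder_of ⟨M + M, fun t => hbd c t⟩
  have cobd : ∀ c : ℝ, IsCoboundedUnder (· ≤ ·) (cocompact ℝ) (fun t => ‖f (t + c) - f t‖) :=
    fun c => isCoboundedUnder_le_of_le _ (fun t => norm_nonneg _)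
  -- subadditivity
  have subadd : ∀ a b : ℝ, G (a + b) ≤ G a + G b := by
    intro a b
    have h1 : ∀ t : ℝ, ‖f (t + (a + b)) - f t‖ ≤
        ((fun t => ‖f ((t + b) + a) - f (t + b)‖) + (fun t => ‖f (t + b) - f t‖)) t := by
      intro t
      have e : t + (a + b) = (t + b) + a := by ring
      rw [e]
      calc ‖f ((t + b) + a) - f t‖
          = ‖(f ((t + b) + a) - f (t + b)) + (f (t + b) - f t)‖ := by rw [sub_add_sub_cancel]
        _ ≤ _ := norm_add_le _ _
    calc G (a + b) ≤ limsup
          ((fun t => ‖f ((t + b) + a) - f (t + b)‖) + (fun t => ‖f (t + b) - f t‖))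
          (cocompact ℝ) := by
            refine limsup_le_limsup (Eventually.of_forall h1) (cobd _) ?_
            exact isBoundedUnder_of ⟨(M + M) + (M + M), fun t =>
              add_le_add (hbd a (t + b)) (hbd b t)⟩
      _ ≤ limsup (fun t => ‖f ((t + b) + a) - f (t + b)‖) (cocompact ℝ)
          + limsup (fun t => ‖f (t + b) - f t‖) (cocompact ℝ) := by
            refine limsup_add_le ?_ ?_ ?_ ?_
            · exact isBoundedUnder_of ⟨0, fun t => norm_nonneg _⟩
            · exact isBoundedUnder_of ⟨M + M, fun t => hbd a (t + b)⟩
            · exact cobd b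
            · exact bd b
      _ = G a + G b := by
            rw [hGdef]
            congr 1
            exact limsup_shift (fun s => ‖f (s + a) - f s‖) b
  -- negation
  have Gneg : ∀ σ : ℝ, G (-σ) ≤ G σ := by
    intro σ
    have e1 : G (-σ) = limsup (fun t => ‖f ((t + σ) + -σ) - f (t + σ)‖) (cocompact ℝ) :=
      (limsup_shift (fun t => ‖f (t + -σ) - f t‖) σ).symm
    have e2 : (fun t : ℝ => ‖f ((t + σ) + -σ) - f (t + σ)‖)
        = fun t : ℝ => ‖f (t + σ) - f t‖ := by
      funext t; rw [add_neg_cancel_right, norm_sub_rev]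
    rw [e1, e2]
  refine ⟨hu, fun ε hε => ?_⟩
  -- uniform continuity
  obtain ⟨δ, hδ, hδf⟩ := Metric.uniformContinuous_iff.mp hUC (ε / 4) (by linarith)
  -- small shifts give small G
  have small : ∀ h : ℝ, |h| < δ → G h ≤ ε / 4 := by
    intro h hh
    refine limsup_le_of_le (cobd h) (Eventually.of_forall fun t => ?_)
    have : dist (t + h) t < δ := by
      rw [Real.dist_eq, add_sub_cancel_left]; exact hh
    have := hδf this
    rw [dist_eq_norm] at this
    exact this.le
  -- relatively dense set of real ε/4-translation numbers
  obtain ⟨L, hL, hT⟩ := hRAP (ε / 4) (by linarith)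
  -- pigeonhole setup
  set N : ℕ := ⌊1 / δ⌋₊ + 1 with hNdef
  have hNpos : (0 : ℝ) < N := by positivity
  have hNδ : 1 < δ * N := by
    have h1 : 1 / δ < N := by
      calc (1 / δ : ℝ) < ⌊1 / δ⌋₊ + 1 := Nat.lt_floor_add_one _
        _ = N := by rw [hNdef]; push_cast; ring
    calc (1 : ℝ) = δ * (1 / δ) := by field_simp
      _ < δ * N := by exact mul_lt_mul_of_pos_left h1 hδ
  set cls : ℝ → ℕ := fun τ => ⌊Int.fract τ * N⌋₊ with hclsdef
  have hclslt : ∀ τ : ℝ, cls τ < N := by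
    intro τ
    rw [hclsdef]
    rw [Nat.floor_lt (mul_nonneg (Int.fract_nonneg _) hNpos.le)]
    have h1 := Int.fract_lt_one τ
    nlinarith
  have hclose : ∀ τ σ : ℝ, cls τ = cls σ → |Int.fract τ - Int.fract σ| < δ := by
    intro τ σ hc
    have ha1 : (⌊Int.fract τ * N⌋₊ : ℝ) ≤ Int.fract τ * N :=
      Nat.floor_le (mul_nonneg (Int.fract_nonneg _) hNpos.le)
    have ha2 : Int.fract τ * N < ⌊Int.fract τ * N⌋₊ + 1 := Nat.lt_floor_add_one _
    have hb1 : (⌊Int.fract σ * N⌋₊ : ℝ) ≤ Int.fract σ * N :=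
      Nat.floor_le (mul_nonneg (Int.fract_nonneg _) hNpos.le)
    have hb2 : Int.fract σ * N < ⌊Int.fract σ * N⌋₊ + 1 := Nat.lt_floor_add_one _
    have hcr : ((⌊Int.fract τ * N⌋₊ : ℕ) : ℝ) = ((⌊Int.fract σ * N⌋₊ : ℕ) : ℝ) := by
      exact_mod_cast congrArg (fun x : ℕ => (x : ℝ)) hc
    have key : |Int.fract τ - Int.fract σ| * N < 1 := by
      rw [← abs_of_pos hNpos, ← abs_mul, sub_mul]
      rw [abs_lt]
      constructor <;> nlinarith
    have : |Int.fract τ - Int.fract σ| * N < δ * N := lt_trans key hNδ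
    exact lt_of_mul_lt_mul_right this (le_of_lt hNpos)
  -- representatives for each class
  set P : ℝ → Prop := fun σ =>
    limsup (fun t => ‖f (t + σ) - f t‖) (cocompact ℝ) < ε / 4 with hPdef
  have hrep : ∀ c : ℕ, ∃ σ : ℝ, (∃ σ', P σ' ∧ cls σ' = c) → (P σ ∧ cls σ = c) := by
    intro c
    by_cases h : ∃ σ', P σ' ∧ cls σ' = c
    · obtain ⟨σ, hσ⟩ := h; exact ⟨σ, fun _ => hσ⟩
    · exact ⟨0, fun h' => absurd h' h⟩
  choose Φ hΦ using hrep
  set B : ℝ := ∑ c ∈ Finset.range N, |Φ c| with hBdef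
  have hBnonneg : 0 ≤ B := Finset.sum_nonneg fun _ _ => abs_nonneg _
  have hBle : ∀ c : ℕ, c < N → |Φ c| ≤ B :=
    fun c hc => Finset.single_le_sum (fun i _ => abs_nonneg (Φ i))
      (Finset.mem_range.mpr hc)
  -- the integer gap
  refine ⟨⌈L + B + 1⌉, Int.ceil_pos.mpr (by linarith), fun x => ?_⟩
  obtain ⟨τ, hτT, hτx⟩ := hT (x : ℝ)
  have hτG : P τ := hτT
  have hex : ∃ σ', P σ' ∧ cls σ' = cls τ := ⟨τ, hτG, rfl⟩
  obtain ⟨hPσ, hclsσ⟩ := hΦ (cls τ) hex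
  set σ : ℝ := Φ (cls τ) with hσdef
  set n : ℤ := ⌊τ⌋ - ⌊σ⌋ with hndef
  have hn : (n : ℝ) = (τ + -σ) + (Int.fract σ - Int.fract τ) := by
    rw [hndef]
    rw [← Int.self_sub_floor τ, ← Int.self_sub_floor σ]
    push_cast
    ring
  have hfr : |Int.fract σ - Int.fract τ| < δ := by
    rw [abs_sub_comm]
    exact hclose τ σ hclsσ.symm
  have hfr1 : |Int.fract σ - Int.fract τ| ≤ 1 := by
    have h1 := Int.fract_nonneg σ
    have h2 := Int.fract_lt_one σ
    have h3 := Int.fract_nonneg τ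
    have h4 := Int.fract_lt_one τ
    rw [abs_le]; constructor <;> linarith
  -- G n < ε
  have hGn : G (n : ℝ) < ε := by
    rw [hn]
    calc G ((τ + -σ) + (Int.fract σ - Int.fract τ))
        ≤ G (τ + -σ) + G (Int.fract σ - Int.fract τ) := subadd _ _
      _ ≤ (G τ + G (-σ)) + G (Int.fract σ - Int.fract τ) :=
          add_le_add (subadd τ (-σ)) le_rfl
      _ ≤ (G τ + G σ) + G (Int.fract σ - Int.fract τ) :=
          add_le_add (add_le_add le_rfl (Gneg σ)) le_rfl
      _ < ε / 4 + ε / 4 + ε / 4 := by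
          have h1 : G τ < ε / 4 := hτG
          have h2 : G σ < ε / 4 := hPσ
          have h3 : G (Int.fract σ - Int.fract τ) ≤ ε / 4 := small _ hfr
          linarith
      _ < ε := by linarith
  refine ⟨n, ?_, ?_⟩
  · -- n is an ε-translation number of u
    show limsup (fun k : ℤ => ‖u (k + n) - u k‖) (cocompact ℤ) < ε
    have he : (fun k : ℤ => ‖u (k + n) - u k‖)
        = (fun t : ℝ => ‖f (t + (n : ℝ)) - f t‖) ∘ (fun k : ℤ => (k : ℝ)) := by
      funext k
      simp only [Function.comp]
      rw [← Int.cast_add, hfu, hfu]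
    rw [he, limsup_comp]
    refine lt_of_le_of_lt ?_ hGn
    refine limsup_le_limsup_of_le
      Int.isClosedEmbedding_coe_real.tendsto_cocompact ?_ (bd _)
    exact isCoboundedUnder_le_of_le _ (fun t => norm_nonneg _)
  · -- n is close to x
    have hreal : |(n : ℝ) - (x : ℝ)| ≤ L + B + 1 := by
      have e : (n : ℝ) - x = ((τ - x) + -σ) + (Int.fract σ - Int.fract τ) := by
        rw [hn]; ring
      rw [e]
      calc |((τ - x) + -σ) + (Int.fract σ - Int.fract τ)|
          ≤ |(τ - x) + -σ| + |Int.fract σ - Int.fract τ| := abs_add_le _ _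
        _ ≤ (|τ - x| + |(-σ)|) + |Int.fract σ - Int.fract τ| :=
            add_le_add (abs_add_le _ _) le_rfl
        _ ≤ (L + B) + 1 := by
            have hσB : |σ| ≤ B := hBle (cls τ) (hclslt τ)
            rw [abs_neg]
            exact add_le_add (add_le_add hτx hσB) hfr1
        _ = L + B + 1 := by ring
    have : ((|n - x| : ℤ) : ℝ) ≤ ((⌈L + B + 1⌉ : ℤ) : ℝ) := by
      rw [Int.cast_abs]
      push_cast
      exact hreal.trans (Int.le_ceil _)
    exact_mod_cast this
end

section
/- Let u : ℤ → ℝ^m be a bounded remotely almost periodic sequence. Define f : ℝ → ℝ^m by piecewise linear interpolation: f(t) = u(n) + (t − n)(u(n+1) − u(n)) for n ≤ t < n+1, n ∈ ℤ. Then f is remotely almost periodic; in particular, every remote ε/3-translation number of u in ℤ is a remote ε-translation number of f. -/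
open Filter

/-- the piecewise linear interpolation of a remotely almost periodic
sequence is remotely almost periodic; every remote `ε/3`-translation number of the
sequence is a remote `ε`-translation number of the interpolation. -/
theorem stmt1 {m : ℕ} (u : ℤ → EuclideanSpace ℝ (Fin m)) (hu : RAPseq u)
    (f : ℝ → EuclideanSpace ℝ (Fin m))
    (hf : ∀ t : ℝ, f t = u ⌊t⌋ + (t - (⌊t⌋ : ℝ)) • (u (⌊t⌋ + 1) - u ⌊t⌋)) :
    RAPfun f ∧
    ∀ ε > (0 : ℝ), ∀ τ : ℤ,
      limsup (fun n : ℤ => ‖u (n + τ) - u n‖) (cocompact ℤ) < ε / 3 →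
      limsup (fun t : ℝ => ‖f (t + (τ : ℝ)) - f t‖) (cocompact ℝ) < ε := by
  obtain ⟨⟨M, hM⟩, hdense⟩ := hu
  have hM0 : 0 ≤ M := le_trans (norm_nonneg _) (hM 0)
  have hθ0 : ∀ t : ℝ, 0 ≤ t - (⌊t⌋ : ℝ) := fun t => sub_nonneg.2 (Int.floor_le t)
  have hθ1 : ∀ t : ℝ, t - (⌊t⌋ : ℝ) ≤ 1 := fun t => by
    have := (Int.lt_floor_add_one t).le; linarith
  -- key identity for translation differences
  have key : ∀ (t : ℝ) (τ : ℤ),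
      f (t + (τ : ℝ)) - f t = (1 - (t - (⌊t⌋ : ℝ))) • (u (⌊t⌋ + τ) - u ⌊t⌋)
        + (t - (⌊t⌋ : ℝ)) • (u (⌊t⌋ + 1 + τ) - u (⌊t⌋ + 1)) := by
    intro t τ
    rw [hf (t + (τ : ℝ)), hf t, Int.floor_add_intCast,
      show ⌊t⌋ + τ + 1 = ⌊t⌋ + 1 + τ by ring]
    push_cast
    module
  -- norm bound for translation differences
  have keybound : ∀ (t : ℝ) (τ : ℤ) (a : ℝ), 0 ≤ a →
      ‖u (⌊t⌋ + τ) - u ⌊t⌋‖ ≤ a → ‖u (⌊t⌋ + 1 + τ) - u (⌊t⌋ + 1)‖ ≤ a →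
      ‖f (t + (τ : ℝ)) - f t‖ ≤ a := by
    intro t τ a ha h1 h2
    rw [key t τ]
    set θ := t - (⌊t⌋ : ℝ) with hθ
    calc ‖(1 - θ) • (u (⌊t⌋ + τ) - u ⌊t⌋) + θ • (u (⌊t⌋ + 1 + τ) - u (⌊t⌋ + 1))‖
        ≤ ‖(1 - θ) • (u (⌊t⌋ + τ) - u ⌊t⌋)‖ + ‖θ • (u (⌊t⌋ + 1 + τ) - u (⌊t⌋ + 1))‖ :=
          norm_add_le _ _
      _ = (1 - θ) * ‖u (⌊t⌋ + τ) - u ⌊t⌋‖ + θ * ‖u (⌊t⌋ + 1 + τ) - u (⌊t⌋ + 1)‖ := by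
          rw [norm_smul, norm_smul, Real.norm_eq_abs, Real.norm_eq_abs,
            abs_of_nonneg (by linarith [hθ1 t]), abs_of_nonneg (hθ0 t)]
      _ ≤ (1 - θ) * a + θ * a := by
          have h3 := hθ0 t; have h4 := hθ1 t
          gcongr <;> linarith
      _ = a := by ring
  -- part 2 : translation numbers transfer
  have part2 : ∀ ε > (0 : ℝ), ∀ τ : ℤ,
      limsup (fun n : ℤ => ‖u (n + τ) - u n‖) (cocompact ℤ) < ε / 3 →
      limsup (fun t : ℝ => ‖f (t + (τ : ℝ)) - f t‖) (cocompact ℝ) < ε := by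
    intro ε hε τ hτ
    have hbd : IsBoundedUnder (· ≤ ·) (cocompact ℤ) (fun n => ‖u (n + τ) - u n‖) :=
      ⟨2 * M, eventually_map.2 <| Eventually.of_forall fun (n : ℤ) => by
        calc ‖u (n + τ) - u n‖ ≤ ‖u (n + τ)‖ + ‖u n‖ := norm_sub_le _ _
          _ ≤ 2 * M := by linarith [hM (n + τ), hM n]⟩
    have hev := eventually_lt_of_limsup_lt hτ hbd
    rw [cocompact_eq_atBot_atTop, eventually_sup, eventually_atBot, eventually_atTop] at hev
    obtain ⟨⟨N₁, hN₁⟩, ⟨N₂, hN₂⟩⟩ := hev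
    have hevR : ∀ᶠ t : ℝ in cocompact ℝ, ‖f (t + (τ : ℝ)) - f t‖ ≤ ε / 3 := by
      rw [cocompact_eq_atBot_atTop, eventually_sup, eventually_atBot, eventually_atTop]
      constructor
      · refine ⟨(N₁ : ℝ) - 1, fun t ht => ?_⟩
        have h0 : (⌊t⌋ : ℝ) ≤ (N₁ : ℝ) - 1 := le_trans (Int.floor_le t) ht
        have h1 : ⌊t⌋ + 1 ≤ N₁ := by
          have h2 : ((⌊t⌋ + 1 : ℤ) : ℝ) ≤ (N₁ : ℝ) := by push_cast; linarith
          exact_mod_cast h2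
        exact keybound t τ (ε / 3) (by linarith) (hN₁ _ (by omega)).le (hN₁ _ h1).le
      · refine ⟨(N₂ : ℝ), fun t ht => ?_⟩
        have h1 : N₂ ≤ ⌊t⌋ := Int.le_floor.2 ht
        exact keybound t τ (ε / 3) (by linarith) (hN₂ _ h1).le (hN₂ _ (by omega)).le
    have hcob : IsCoboundedUnder (· ≤ ·) (cocompact ℝ)
        (fun t => ‖f (t + (τ : ℝ)) - f t‖) :=
      isCoboundedUnder_le_of_le _ (fun t => norm_nonneg _)
    calc limsup (fun t : ℝ => ‖f (t + (τ : ℝ)) - f t‖) (cocompact ℝ) ≤ ε / 3 :=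
          limsup_le_of_le hcob hevR
      _ < ε := by linarith
  -- f is bounded by M
  have hfbdd : ∀ t, ‖f t‖ ≤ M := by
    intro t
    have h1 : f t = (1 - (t - (⌊t⌋ : ℝ))) • u ⌊t⌋ + (t - (⌊t⌋ : ℝ)) • u (⌊t⌋ + 1) := by
      rw [hf t]; module
    rw [h1]
    set θ := t - (⌊t⌋ : ℝ) with hθ
    calc ‖(1 - θ) • u ⌊t⌋ + θ • u (⌊t⌋ + 1)‖
        ≤ ‖(1 - θ) • u ⌊t⌋‖ + ‖θ • u (⌊t⌋ + 1)‖ := norm_add_le _ _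
      _ = (1 - θ) * ‖u ⌊t⌋‖ + θ * ‖u (⌊t⌋ + 1)‖ := by
          rw [norm_smul, norm_smul, Real.norm_eq_abs, Real.norm_eq_abs,
            abs_of_nonneg (by linarith [hθ1 t]), abs_of_nonneg (hθ0 t)]
      _ ≤ (1 - θ) * M + θ * M := by
          have h3 := hθ0 t; have h4 := hθ1 t
          gcongr <;> first | linarith | exact hM _
      _ = M := by ring
  -- same-floor difference identity
  have L1 : ∀ s t : ℝ, ⌊s⌋ = ⌊t⌋ → f t - f s = (t - s) • (u (⌊s⌋ + 1) - u ⌊s⌋) := by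
    intro s t h
    rw [hf t, hf s, ← h]
    module
  -- difference to next integer
  have L2 : ∀ s : ℝ, f ((⌊s⌋ : ℝ) + 1) - f s = (((⌊s⌋ : ℝ) + 1) - s) • (u (⌊s⌋ + 1) - u ⌊s⌋) := by
    intro s
    have hfl : ⌊(⌊s⌋ : ℝ) + 1⌋ = ⌊s⌋ + 1 := by
      rw [show ((⌊s⌋ : ℝ) + 1) = ((⌊s⌋ + 1 : ℤ) : ℝ) by push_cast; ring, Int.floor_intCast]
    rw [hf ((⌊s⌋ : ℝ) + 1), hf s, hfl]
    push_cast
    module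
  have hd : ∀ n : ℤ, ‖u (n + 1) - u n‖ ≤ 2 * M := fun n => by
    calc ‖u (n + 1) - u n‖ ≤ ‖u (n + 1)‖ + ‖u n‖ := norm_sub_le _ _
      _ ≤ 2 * M := by linarith [hM (n + 1), hM n]
  -- Lipschitz estimate by induction on the number of integers between
  have lip : ∀ k : ℕ, ∀ s t : ℝ, s ≤ t → (⌊t⌋ - ⌊s⌋).toNat = k →
      ‖f t - f s‖ ≤ 2 * M * (t - s) := by
    intro k
    induction k with
    | zero =>
      intro s t hst hk
      have hfl : ⌊s⌋ = ⌊t⌋ := le_antisymm (Int.floor_le_floor hst) (by omega)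
      rw [L1 s t hfl, norm_smul, Real.norm_eq_abs, abs_of_nonneg (by linarith)]
      calc (t - s) * ‖u (⌊s⌋ + 1) - u ⌊s⌋‖ ≤ (t - s) * (2 * M) := by
            gcongr
            · exact hd _
        _ = 2 * M * (t - s) := by ring
    | succ k ih =>
      intro s t hst hk
      have hflt : ⌊s⌋ + 1 ≤ ⌊t⌋ := by
        have := Int.floor_le_floor hst; omega
      set c : ℝ := (⌊s⌋ : ℝ) + 1 with hc
      have hsc : s ≤ c := (Int.lt_floor_add_one s).le
      have hfloorc : ⌊c⌋ = ⌊s⌋ + 1 := by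
        rw [hc, show ((⌊s⌋ : ℝ) + 1) = ((⌊s⌋ + 1 : ℤ) : ℝ) by push_cast; ring,
          Int.floor_intCast]
      have hct : c ≤ t := by
        have h1 : ((⌊s⌋ + 1 : ℤ) : ℝ) ≤ ((⌊t⌋ : ℤ) : ℝ) := by exact_mod_cast hflt
        calc c = ((⌊s⌋ + 1 : ℤ) : ℝ) := by push_cast; ring
          _ ≤ (⌊t⌋ : ℝ) := h1
          _ ≤ t := Int.floor_le t
      have h1 : ‖f c - f s‖ ≤ 2 * M * (c - s) := by
        rw [hc, L2 s, norm_smul, Real.norm_eq_abs, abs_of_nonneg (by linarith)]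
        calc ((⌊s⌋ : ℝ) + 1 - s) * ‖u (⌊s⌋ + 1) - u ⌊s⌋‖
            ≤ ((⌊s⌋ : ℝ) + 1 - s) * (2 * M) := by
              gcongr
              · exact hd _
          _ = 2 * M * (((⌊s⌋ : ℝ) + 1) - s) := by ring
      have h2 : ‖f t - f c‖ ≤ 2 * M * (t - c) := ih c t hct (by omega)
      calc ‖f t - f s‖ = ‖(f t - f c) + (f c - f s)‖ := by rw [sub_add_sub_cancel]
        _ ≤ ‖f t - f c‖ + ‖f c - f s‖ := norm_add_le _ _
        _ ≤ 2 * M * (t - c) + 2 * M * (c - s) := add_le_add h2 h1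
        _ = 2 * M * (t - s) := by ring
  have hlip : ∀ s t : ℝ, dist (f s) (f t) ≤ 2 * M * dist s t := by
    intro s t
    rcases le_total s t with h | h
    · rw [dist_eq_norm, norm_sub_rev, Real.dist_eq, abs_of_nonpos (by linarith)]
      have := lip (⌊t⌋ - ⌊s⌋).toNat s t h rfl
      linarith
    · rw [dist_eq_norm, Real.dist_eq, abs_of_nonneg (by linarith)]
      have := lip (⌊s⌋ - ⌊t⌋).toNat t s h rfl
      linarith
  have hUC : UniformContinuous f := by
    refine LipschitzWith.uniformContinuous (K := Real.toNNReal (2 * M)) ?_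
    refine LipschitzWith.of_dist_le_mul fun x y => ?_
    rw [Real.coe_toNNReal _ (by positivity)]
    exact hlip x y
  refine ⟨⟨⟨M, hfbdd⟩, hUC, ?_⟩, part2⟩
  intro ε hε
  obtain ⟨L, hL, hLd⟩ := hdense (ε / 3) (by linarith)
  refine ⟨(L : ℝ) + 1, by positivity, fun x => ?_⟩
  obtain ⟨τ, hτS, hτd⟩ := hLd ⌊x⌋
  refine ⟨(τ : ℝ), part2 ε hε τ hτS, ?_⟩
  have h1 : |(τ : ℝ) - (⌊x⌋ : ℝ)| ≤ (L : ℝ) := by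
    have : ((|τ - ⌊x⌋| : ℤ) : ℝ) ≤ (L : ℝ) := by exact_mod_cast hτd
    push_cast at this
    exact this
  have h2 : |(⌊x⌋ : ℝ) - x| ≤ 1 :=
    abs_le.2 ⟨by linarith [Int.lt_floor_add_one x], by linarith [Int.floor_le x]⟩
  calc |(τ : ℝ) - x| ≤ |(τ : ℝ) - (⌊x⌋ : ℝ)| + |(⌊x⌋ : ℝ) - x| := abs_sub_le _ _ _
    _ ≤ (L : ℝ) + 1 := add_le_add h1 h2
end

section
/- Let α > 0 and K ≥ 1, and let G̃ : ℤ × ℤ → M_{q×q}(ℝ) satisfy ‖G̃(n,m)‖ ≤ K e^{−α|n−m|}. Let h : ℤ → ℝ^q be a bounded remotely almost periodic sequence, and suppose G̃ is bi-remotely almost periodic and summable, i.e., for every ε > 0 there is a relatively dense set T(G̃,ε) ⊆ ℤ such that for τ ∈ T(G̃,ε), limsup_{|n|→∞} ∑_{k∈ℤ} ‖G̃(n+τ, k+τ) − G̃(n,k)‖ ≤ ε. Then the sequence y(n) = ∑_{k∈ℤ} G̃(n,k) h(k) is remotely almost periodic. -/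
open Filter

open Topology

namespace Stmt8Aux




lemma relDense_mono {S T : Set ℤ} (hST : S ⊆ T) (hS : RelDenseZ S) : RelDenseZ T := by
  obtain ⟨L, hL, hx⟩ := hS
  exact ⟨L, hL, fun x => by obtain ⟨τ, hτ, hd⟩ := hx x; exact ⟨τ, hST hτ, hd⟩⟩

/-! ### limsup helpers over `cofinite : Filter ℤ` -/

lemma bddu {u : ℤ → ℝ} {C : ℝ} (hC : ∀ n, u n ≤ C) :
    IsBoundedUnder (· ≤ ·) (cofinite : Filter ℤ) u :=
  isBoundedUnder_of ⟨C, hC⟩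

lemma cobddu {u : ℤ → ℝ} (h0 : ∀ n, 0 ≤ u n) :
    IsCoboundedUnder (· ≤ ·) (cofinite : Filter ℤ) u :=
  isCoboundedUnder_le_of_le _ h0

lemma bddl {u : ℤ → ℝ} (h0 : ∀ n, 0 ≤ u n) :
    IsBoundedUnder (· ≥ ·) (cofinite : Filter ℤ) u :=
  isBoundedUnder_of ⟨0, h0⟩

lemma my_limsup_le {u : ℤ → ℝ} {a : ℝ} (h0 : ∀ n, 0 ≤ u n)
    (h : ∀ᶠ n in (cofinite : Filter ℤ), u n ≤ a) : limsup u cofinite ≤ a :=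
  limsup_le_of_le (cobddu h0) h

lemma my_limsup_mono {u v : ℤ → ℝ} {C : ℝ} (h0 : ∀ n, 0 ≤ u n) (hvC : ∀ n, v n ≤ C)
    (h : ∀ n, u n ≤ v n) : limsup u (cofinite : Filter ℤ) ≤ limsup v cofinite :=
  limsup_le_limsup (Eventually.of_forall h) (cobddu h0) (bddu hvC)

lemma my_limsup_add {u v : ℤ → ℝ} {C : ℝ} (hu0 : ∀ n, 0 ≤ u n) (huC : ∀ n, u n ≤ C)
    (hv0 : ∀ n, 0 ≤ v n) (hvC : ∀ n, v n ≤ C) :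
    limsup (fun n => u n + v n) (cofinite : Filter ℤ) ≤
      limsup u cofinite + limsup v cofinite :=
  limsup_add_le (bddl hu0) (bddu huC) (cobddu hv0) (bddu hvC)

lemma map_addRight_cofinite (t : ℤ) :
    map (fun n : ℤ => n + t) cofinite = cofinite :=
  le_antisymm (add_left_injective t).tendsto_cofinite
    (Function.Surjective.le_map_cofinite (fun y => ⟨y - t, by ring⟩))

lemma limsup_shift (f : ℤ → ℝ) (t : ℤ) :
    limsup (fun n => f (n + t)) (cofinite : Filter ℤ) = limsup f cofinite := by
  have h1 : (fun n : ℤ => f (n + t)) = f ∘ (fun n : ℤ => n + t) := rfl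
  rw [h1, limsup_comp, map_addRight_cofinite]

/-! ### total boundedness machinery -/

lemma tb_of_ball_rd (d : ℤ → ℤ → ℝ)
    (hinv : ∀ a b t, d (a + t) (b + t) = d a b)
    (hrd : ∀ ε > (0:ℝ), RelDenseZ {τ | d τ 0 < ε}) :
    ∀ ε > (0:ℝ), ∃ F : Finset ℤ, ∀ x : ℤ, ∃ c ∈ F, d x c < ε := by
  intro ε hε
  obtain ⟨L, hL, hLx⟩ := hrd ε hε
  refine ⟨Finset.Icc (-L) L, fun x => ?_⟩
  obtain ⟨τ, hτ, hdist⟩ := hLx x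
  have habs := abs_le.mp hdist
  refine ⟨x - τ, by rw [Finset.mem_Icc]; omega, ?_⟩
  have h2 : d x (x - τ) = d τ 0 := by
    have := hinv τ 0 (x - τ)
    rwa [show τ + (x - τ) = x by ring, zero_add] at this
  rw [h2]; exact hτ

lemma tb_pair (d₁ d₂ : ℤ → ℤ → ℝ)
    (hsym₁ : ∀ a b, d₁ a b = d₁ b a) (htri₁ : ∀ a b c, d₁ a c ≤ d₁ a b + d₁ b c)
    (hsym₂ : ∀ a b, d₂ a b = d₂ b a) (htri₂ : ∀ a b c, d₂ a c ≤ d₂ a b + d₂ b c)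
    (htb₁ : ∀ ε > (0:ℝ), ∃ F : Finset ℤ, ∀ x : ℤ, ∃ c ∈ F, d₁ x c < ε)
    (htb₂ : ∀ ε > (0:ℝ), ∃ F : Finset ℤ, ∀ x : ℤ, ∃ c ∈ F, d₂ x c < ε) :
    ∀ ε > (0:ℝ), ∃ F : Finset ℤ, ∀ x : ℤ, ∃ c ∈ F, d₁ x c < ε ∧ d₂ x c < ε := by
  intro ε hε
  obtain ⟨F₁, hF₁⟩ := htb₁ (ε/2) (by positivity)
  obtain ⟨F₂, hF₂⟩ := htb₂ (ε/2) (by positivity)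
  classical
  have hch : ∀ p : ℤ × ℤ, ∃ w : ℤ, (∃ x : ℤ, d₁ x p.1 < ε/2 ∧ d₂ x p.2 < ε/2) →
      d₁ w p.1 < ε/2 ∧ d₂ w p.2 < ε/2 := by
    intro p
    by_cases hp : ∃ x : ℤ, d₁ x p.1 < ε/2 ∧ d₂ x p.2 < ε/2
    · exact ⟨hp.choose, fun _ => hp.choose_spec⟩
    · exact ⟨0, fun hx => absurd hx hp⟩
  choose w hw using hch
  refine ⟨(F₁ ×ˢ F₂).image w, fun x => ?_⟩
  obtain ⟨c₁, hc₁F, hc₁⟩ := hF₁ x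
  obtain ⟨c₂, hc₂F, hc₂⟩ := hF₂ x
  have hspec := hw (c₁, c₂) ⟨x, hc₁, hc₂⟩
  refine ⟨w (c₁, c₂), Finset.mem_image_of_mem _ (Finset.mem_product.2 ⟨hc₁F, hc₂F⟩), ?_, ?_⟩
  · calc d₁ x (w (c₁, c₂)) ≤ d₁ x c₁ + d₁ c₁ (w (c₁, c₂)) := htri₁ _ _ _
      _ < ε/2 + ε/2 := add_lt_add hc₁ (by rw [hsym₁]; exact hspec.1)
      _ = ε := by ring
  · calc d₂ x (w (c₁, c₂)) ≤ d₂ x c₂ + d₂ c₂ (w (c₁, c₂)) := htri₂ _ _ _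
      _ < ε/2 + ε/2 := add_lt_add hc₂ (by rw [hsym₂]; exact hspec.2)
      _ = ε := by ring

lemma ball_rd (d₁ d₂ : ℤ → ℤ → ℝ)
    (hsym₁ : ∀ a b, d₁ a b = d₁ b a) (htri₁ : ∀ a b c, d₁ a c ≤ d₁ a b + d₁ b c)
    (hinv₁ : ∀ a b t, d₁ (a + t) (b + t) = d₁ a b)
    (hsym₂ : ∀ a b, d₂ a b = d₂ b a) (htri₂ : ∀ a b c, d₂ a c ≤ d₂ a b + d₂ b c)
    (hinv₂ : ∀ a b t, d₂ (a + t) (b + t) = d₂ a b)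
    (hrd₁ : ∀ ε > (0:ℝ), RelDenseZ {τ | d₁ τ 0 < ε})
    (hrd₂ : ∀ ε > (0:ℝ), RelDenseZ {τ | d₂ τ 0 < ε}) :
    ∀ ε > (0:ℝ), RelDenseZ {τ | d₁ τ 0 < ε ∧ d₂ τ 0 < ε} := by
  intro ε hε
  obtain ⟨F, hF⟩ := tb_pair d₁ d₂ hsym₁ htri₁ hsym₂ htri₂
    (tb_of_ball_rd d₁ hinv₁ hrd₁) (tb_of_ball_rd d₂ hinv₂ hrd₂) (ε/2) (by positivity)
  set B : ℤ := ∑ c ∈ F, |c| with hBdef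
  have hBle : ∀ c ∈ F, |c| ≤ B := fun c hc =>
    Finset.single_le_sum (fun i _ => abs_nonneg i) hc
  have hB0 : 0 ≤ B := Finset.sum_nonneg fun i _ => abs_nonneg i
  refine ⟨2*B + 1, by omega, fun x => ?_⟩
  obtain ⟨cx, hcxF, hcx1, hcx2⟩ := hF x
  obtain ⟨c0, hc0F, hc01, hc02⟩ := hF 0
  have key : ∀ d : ℤ → ℤ → ℝ, (∀ a b, d a b = d b a) → (∀ a b c, d a c ≤ d a b + d b c) →
      (∀ a b t, d (a + t) (b + t) = d a b) → d x cx < ε/2 → d 0 c0 < ε/2 →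
      d (x - cx + c0) 0 < ε := by
    intro d hsym htri hinv h1 h2
    have e1 : d (x - cx + c0) c0 = d x cx := by
      have ha := hinv (x - cx) 0 c0
      have hb := hinv (x - cx) 0 cx
      rw [zero_add] at ha hb
      rw [show x - cx + cx = x by ring] at hb
      rw [ha, ← hb]
    calc d (x - cx + c0) 0 ≤ d (x - cx + c0) c0 + d c0 0 := htri _ _ _
      _ = d x cx + d 0 c0 := by rw [e1, hsym c0 0]
      _ < ε/2 + ε/2 := add_lt_add h1 h2
      _ = ε := by ring
  refine ⟨x - cx + c0, ⟨key d₁ hsym₁ htri₁ hinv₁ hcx1 hc01, key d₂ hsym₂ htri₂ hinv₂ hcx2 hc02⟩, ?_⟩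
  have : x - cx + c0 - x = c0 - cx := by ring
  rw [this]
  calc |c0 - cx| ≤ |c0| + |cx| := abs_sub _ _
    _ ≤ B + B := add_le_add (hBle _ hc0F) (hBle _ hcxF)
    _ ≤ 2*B + 1 := by omega



noncomputable def ee (α : ℝ) (n k : ℤ) : ℝ := Real.exp (-α * |(n : ℝ) - (k : ℝ)|)

lemma ee_pos (α : ℝ) (n k : ℤ) : 0 < ee α n k := Real.exp_pos _

lemma ee_le_one {α : ℝ} (hα : 0 < α) (n k : ℤ) : ee α n k ≤ 1 :=
  Real.exp_le_one_iff.mpr (by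
    have : (0:ℝ) ≤ |(n:ℝ) - (k:ℝ)| := abs_nonneg _
    nlinarith)

lemma ee_shift (α : ℝ) (n k t : ℤ) : ee α (n + t) (k + t) = ee α n k := by
  unfold ee
  congr 1
  rw [show ((n + t : ℤ) : ℝ) - ((k + t : ℤ) : ℝ) = (n : ℝ) - (k : ℝ) by push_cast; ring]

noncomputable def CC (α : ℝ) : ℝ := ∑' j : ℤ, Real.exp (-α * |(j : ℝ)|)

lemma summable_base {α : ℝ} (hα : 0 < α) :
    Summable fun j : ℤ => Real.exp (-α * |(j : ℝ)|) := by
  have hs : Summable fun n : ℕ => Real.exp ((n : ℝ) * (-α)) :=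
    Real.summable_exp_nat_mul_iff.mpr (neg_lt_zero.mpr hα)
  apply Summable.of_nat_of_neg
  · exact hs.congr fun n => by
      rw [show (((n : ℤ) : ℝ)) = (n : ℝ) by push_cast; ring,
        abs_of_nonneg (Nat.cast_nonneg n)]; ring_nf
  · exact hs.congr fun n => by
      rw [show (((-(n : ℤ) : ℤ) : ℝ)) = -(n : ℝ) by push_cast; ring,
        abs_neg, abs_of_nonneg (Nat.cast_nonneg n)]; ring_nf

lemma summable_ee {α : ℝ} (hα : 0 < α) (n : ℤ) : Summable (ee α n) := by
  have h1 : Summable ((fun j : ℤ => Real.exp (-α * |(j : ℝ)|)) ∘ (Equiv.subLeft n)) :=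
    (summable_base hα).comp_injective (Equiv.subLeft n).injective
  exact h1.congr fun k => by
    simp only [Function.comp_apply, Equiv.subLeft_apply, ee]
    congr 1
    rw [show ((n - k : ℤ) : ℝ) = (n : ℝ) - (k : ℝ) by push_cast; ring]

lemma tsum_ee {α : ℝ} (hα : 0 < α) (n : ℤ) : ∑' k : ℤ, ee α n k = CC α :=
  calc ∑' k : ℤ, ee α n k
      = ∑' k : ℤ, Real.exp (-α * |((Equiv.subLeft n k : ℤ) : ℝ)|) := by
        refine tsum_congr fun k => ?_
        simp only [Equiv.subLeft_apply, ee]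
        congr 1
        rw [show ((n - k : ℤ) : ℝ) = (n : ℝ) - (k : ℝ) by push_cast; ring]
    _ = ∑' j : ℤ, Real.exp (-α * |(j : ℝ)|) :=
        (Equiv.subLeft n).tsum_eq (fun j : ℤ => Real.exp (-α * |(j : ℝ)|))
    _ = CC α := rfl

lemma one_le_CC {α : ℝ} (hα : 0 < α) : 1 ≤ CC α := by
  have := Summable.le_tsum (summable_base hα) 0 (fun j _ => (Real.exp_pos _).le)
  unfold CC
  simpa [neg_mul] using this

lemma tendsto_ee {α : ℝ} (hα : 0 < α) (k : ℤ) :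
    Tendsto (fun n : ℤ => ee α n k) cofinite (𝓝 0) := by
  simp only [ee]
  rw [Metric.tendsto_nhds]
  intro ε hε
  rw [eventually_cofinite]
  set R : ℤ := ⌈-Real.log ε / α⌉ + 1 with hR
  apply Set.Finite.subset (Set.finite_Icc (k - R) (k + R))
  intro n hn
  simp only [Set.mem_setOf_eq, Real.dist_eq, sub_zero, not_lt] at hn
  rw [abs_of_pos (Real.exp_pos _)] at hn
  have h1 : ε ≤ Real.exp (-α * |(n:ℝ) - (k:ℝ)|) := hn
  have h2 : Real.log ε ≤ -α * |(n:ℝ) - (k:ℝ)| := by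
    have := Real.log_le_log hε h1
    rwa [Real.log_exp] at this
  have h3 : |(n:ℝ) - (k:ℝ)| ≤ -Real.log ε / α := by
    rw [le_div_iff₀ hα]
    nlinarith [abs_nonneg ((n:ℝ) - (k:ℝ))]
  have h4 : |(n : ℝ) - (k : ℝ)| ≤ (R : ℝ) := by
    calc |(n:ℝ) - (k:ℝ)| ≤ -Real.log ε / α := h3
      _ ≤ (⌈-Real.log ε / α⌉ : ℝ) := Int.le_ceil _
      _ ≤ (R : ℝ) := by rw [hR]; push_cast; linarith
  have h5 : |n - k| ≤ R := by exact_mod_cast h4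
  have h6 := abs_le.mp h5
  simp only [Set.mem_Icc]
  omega



section main

abbrev EE (q : ℕ) := EuclideanSpace ℝ (Fin q)

variable {q : ℕ}


noncomputable def d1 (h : ℤ → EE q) (a b : ℤ) : ℝ :=
  limsup (fun n => ‖h (n + a) - h (n + b)‖) cofinite

noncomputable def d2 (G : ℤ → ℤ → (EE q →L[ℝ] EE q)) (a b : ℤ) : ℝ :=
  limsup (fun n => ∑' k : ℤ, ‖G (n + a) (k + a) - G (n + b) (k + b)‖) cofinite

variable {h : ℤ → EE q} {M₀ : ℝ} {G : ℤ → ℤ → (EE q →L[ℝ] EE q)} {α K : ℝ}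

lemma d1_sym (h : ℤ → EE q) (a b : ℤ) : d1 h a b = d1 h b a := by
  unfold d1; congr 1; funext n; exact norm_sub_rev _ _

lemma d1_tri (hM₀ : ∀ n, ‖h n‖ ≤ M₀) (a b c : ℤ) : d1 h a c ≤ d1 h a b + d1 h b c := by
  have hb : ∀ x y : ℤ, ∀ n : ℤ, ‖h (n + x) - h (n + y)‖ ≤ M₀ + M₀ := fun x y n =>
    (norm_sub_le _ _).trans (add_le_add (hM₀ _) (hM₀ _))
  calc d1 h a c
      ≤ limsup (fun n => ‖h (n + a) - h (n + b)‖ + ‖h (n + b) - h (n + c)‖) cofinite := by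
        refine my_limsup_mono (fun n => norm_nonneg _) (C := (M₀ + M₀) + (M₀ + M₀))
          (fun n => add_le_add (hb a b n) (hb b c n)) (fun n => ?_)
        exact norm_sub_le_norm_sub_add_norm_sub _ _ _
    _ ≤ d1 h a b + d1 h b c :=
        my_limsup_add (fun n => norm_nonneg _) (hb a b) (fun n => norm_nonneg _) (hb b c)

lemma d1_inv (h : ℤ → EE q) (a b t : ℤ) : d1 h (a + t) (b + t) = d1 h a b := by
  unfold d1
  have : (fun n : ℤ => ‖h (n + (a + t)) - h (n + (b + t))‖)
      = fun n : ℤ => ‖h ((n + t) + a) - h ((n + t) + b)‖ := by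
    funext n; rw [show n + (a + t) = (n + t) + a by ring, show n + (b + t) = (n + t) + b by ring]
  rw [this]
  exact limsup_shift (fun n => ‖h (n + a) - h (n + b)‖) t

-- the summand of d2
lemma d2_summand_summable (hα : 0 < α) (hG : ∀ n m : ℤ, ‖G n m‖ ≤ K * ee α n m)
    (a b n : ℤ) : Summable fun k : ℤ => ‖G (n + a) (k + a) - G (n + b) (k + b)‖ := by
  refine Summable.of_nonneg_of_le (fun k => norm_nonneg _) (fun k => ?_)
    (((summable_ee hα n).mul_left K).add ((summable_ee hα n).mul_left K))
  refine (norm_sub_le _ _).trans (add_le_add ?_ ?_)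
  · have := hG (n + a) (k + a); rwa [ee_shift] at this
  · have := hG (n + b) (k + b); rwa [ee_shift] at this

lemma d2_summand_bound (hα : 0 < α) (hK : 0 < K) (hG : ∀ n m : ℤ, ‖G n m‖ ≤ K * ee α n m)
    (a b n : ℤ) :
    (∑' k : ℤ, ‖G (n + a) (k + a) - G (n + b) (k + b)‖) ≤ 2 * (K * CC α) := by
  have hle : ∀ k : ℤ, ‖G (n + a) (k + a) - G (n + b) (k + b)‖ ≤ (2 * K) * ee α n k := by
    intro k
    have h1 := hG (n + a) (k + a); rw [ee_shift] at h1
    have h2 := hG (n + b) (k + b); rw [ee_shift] at h2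
    calc ‖G (n + a) (k + a) - G (n + b) (k + b)‖ ≤ _ + _ := norm_sub_le _ _
      _ ≤ K * ee α n k + K * ee α n k := add_le_add h1 h2
      _ = (2 * K) * ee α n k := by ring
  calc (∑' k : ℤ, ‖G (n + a) (k + a) - G (n + b) (k + b)‖)
      ≤ ∑' k : ℤ, (2 * K) * ee α n k :=
        Summable.tsum_le_tsum hle (d2_summand_summable hα hG a b n) ((summable_ee hα n).mul_left _)
    _ = (2 * K) * CC α := by rw [tsum_mul_left, tsum_ee hα]
    _ = 2 * (K * CC α) := by ring

lemma d2_summand_nonneg (a b n : ℤ) :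
    0 ≤ ∑' k : ℤ, ‖G (n + a) (k + a) - G (n + b) (k + b)‖ :=
  tsum_nonneg fun k => norm_nonneg _

lemma d2_sym (G : ℤ → ℤ → (EE q →L[ℝ] EE q)) (a b : ℤ) : d2 G a b = d2 G b a := by
  unfold d2; congr 1; funext n; exact tsum_congr fun k => norm_sub_rev _ _

lemma d2_tri (hα : 0 < α) (hK : 0 < K) (hG : ∀ n m : ℤ, ‖G n m‖ ≤ K * ee α n m)
    (a b c : ℤ) : d2 G a c ≤ d2 G a b + d2 G b c := by
  have hpt : ∀ n : ℤ,
      (∑' k : ℤ, ‖G (n + a) (k + a) - G (n + c) (k + c)‖)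
        ≤ (∑' k : ℤ, ‖G (n + a) (k + a) - G (n + b) (k + b)‖)
          + ∑' k : ℤ, ‖G (n + b) (k + b) - G (n + c) (k + c)‖ := by
    intro n
    calc (∑' k : ℤ, ‖G (n + a) (k + a) - G (n + c) (k + c)‖)
        ≤ ∑' k : ℤ, (‖G (n + a) (k + a) - G (n + b) (k + b)‖
            + ‖G (n + b) (k + b) - G (n + c) (k + c)‖) := by
          refine Summable.tsum_le_tsum (fun k => norm_sub_le_norm_sub_add_norm_sub _ _ _)
            (d2_summand_summable hα hG a c n)
            ((d2_summand_summable hα hG a b n).add (d2_summand_summable hα hG b c n))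
      _ = _ := Summable.tsum_add (d2_summand_summable hα hG a b n) (d2_summand_summable hα hG b c n)
  calc d2 G a c
      ≤ limsup (fun n => (∑' k : ℤ, ‖G (n + a) (k + a) - G (n + b) (k + b)‖)
          + ∑' k : ℤ, ‖G (n + b) (k + b) - G (n + c) (k + c)‖) cofinite :=
        my_limsup_mono (fun n => d2_summand_nonneg a c n)
          (C := 2 * (K * CC α) + 2 * (K * CC α))
          (fun n => add_le_add (d2_summand_bound hα hK hG a b n) (d2_summand_bound hα hK hG b c n))
          hpt
    _ ≤ d2 G a b + d2 G b c :=
        my_limsup_add (fun n => d2_summand_nonneg a b n) (fun n => d2_summand_bound hα hK hG a b n)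
          (fun n => d2_summand_nonneg b c n) (fun n => d2_summand_bound hα hK hG b c n)

lemma d2_inv (G : ℤ → ℤ → (EE q →L[ℝ] EE q)) (a b t : ℤ) : d2 G (a + t) (b + t) = d2 G a b := by
  unfold d2
  have : (fun n : ℤ => ∑' k : ℤ, ‖G (n + (a + t)) (k + (a + t)) - G (n + (b + t)) (k + (b + t))‖)
      = fun n : ℤ => ∑' k : ℤ, ‖G ((n + t) + a) (k + a) - G ((n + t) + b) (k + b)‖ := by
    funext n
    calc ∑' k : ℤ, ‖G (n + (a + t)) (k + (a + t)) - G (n + (b + t)) (k + (b + t))‖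
        = ∑' k : ℤ, ‖G ((n + t) + a) ((Equiv.addRight t k : ℤ) + a)
            - G ((n + t) + b) ((Equiv.addRight t k : ℤ) + b)‖ := by
          refine tsum_congr fun k => ?_
          simp only [Equiv.coe_addRight]
          rw [show n + (a + t) = (n + t) + a by ring, show n + (b + t) = (n + t) + b by ring,
            show k + (a + t) = (k + t) + a by ring, show k + (b + t) = (k + t) + b by ring]
      _ = ∑' k : ℤ, ‖G ((n + t) + a) (k + a) - G ((n + t) + b) (k + b)‖ :=
          (Equiv.addRight t).tsum_eq
            (fun k : ℤ => ‖G ((n + t) + a) (k + a) - G ((n + t) + b) (k + b)‖)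
  rw [this]
  exact limsup_shift (fun n => ∑' k : ℤ, ‖G (n + a) (k + a) - G (n + b) (k + b)‖) t

end main
end Stmt8Aux



open Stmt8Aux

/-- if the Green's kernel is exponentially bounded, bi-remotely almost
periodic and summable, and `h` is a remotely almost periodic sequence, then
`y(n) = ∑_{k∈ℤ} G̃(n,k)h(k)` is remotely almost periodic. -/
theorem stmt8 {q : ℕ}
    (G : ℤ → ℤ → (EuclideanSpace ℝ (Fin q) →L[ℝ] EuclideanSpace ℝ (Fin q)))
    (α K : ℝ) (hα : 0 < α) (hK : 1 ≤ K)
    (hG : ∀ n m : ℤ, ‖G n m‖ ≤ K * Real.exp (-α * |(n : ℝ) - (m : ℝ)|))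
    (h : ℤ → EuclideanSpace ℝ (Fin q)) (hh : RAPseq h)
    (hbi : ∀ ε > (0 : ℝ), ∃ S : Set ℤ, RelDenseZ S ∧ ∀ τ ∈ S,
      limsup (fun n : ℤ =>
        ∑' k : ℤ, ‖G (n + τ) (k + τ) - G n k‖) (cocompact ℤ) ≤ ε) :
    RAPseq (fun n => ∑' k : ℤ, G n k (h k)) := by
  classical
  obtain ⟨⟨M, hM⟩, hhrd⟩ := hh
  set M₀ : ℝ := max M 0 with hM₀def
  have hM₀ : ∀ n, ‖h n‖ ≤ M₀ := fun n => (hM n).trans (le_max_left _ _)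
  have hM₀0 : 0 ≤ M₀ := le_max_right _ _
  have hK0 : (0:ℝ) < K := lt_of_lt_of_le one_pos hK
  have hG' : ∀ n m : ℤ, ‖G n m‖ ≤ K * ee α n m := hG
  have hCC1 : 1 ≤ CC α := one_le_CC hα
  have hCC0 : (0:ℝ) < CC α := lt_of_lt_of_le one_pos hCC1
  have hee0 : ∀ n k : ℤ, (0:ℝ) ≤ ee α n k := fun n k => (ee_pos α n k).le
  have hKee0 : ∀ n k : ℤ, (0:ℝ) ≤ K * ee α n k := fun n k => mul_nonneg hK0.le (hee0 n k)
  -- pointwise norm bound for terms of the series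
  have hptnorm : ∀ n t k : ℤ, ‖G (n + t) (k + t) (h (k + t))‖ ≤ (K * M₀) * ee α n k := by
    intro n t k
    calc ‖G (n + t) (k + t) (h (k + t))‖ ≤ ‖G (n + t) (k + t)‖ * ‖h (k + t)‖ :=
        ContinuousLinearMap.le_opNorm _ _
      _ ≤ (K * ee α n k) * M₀ := by
          refine mul_le_mul ?_ (hM₀ _) (norm_nonneg _) (hKee0 n k)
          have := hG' (n + t) (k + t); rwa [ee_shift] at this
      _ = (K * M₀) * ee α n k := by ring
  have htnorm : ∀ n t : ℤ, Summable fun k : ℤ => ‖G (n + t) (k + t) (h (k + t))‖ := by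
    intro n t
    exact Summable.of_nonneg_of_le (fun k => norm_nonneg _) (fun k => hptnorm n t k)
      ((summable_ee hα n).mul_left (K * M₀))
  have hterm : ∀ n t : ℤ, Summable fun k : ℤ => G (n + t) (k + t) (h (k + t)) := fun n t =>
    Summable.of_norm (htnorm n t)
  have hterm0 : ∀ n : ℤ, Summable fun k : ℤ => G n k (h k) := by
    intro n
    have := hterm n 0
    simpa using this
  have htnorm0 : ∀ n : ℤ, Summable fun k : ℤ => ‖G n k (h k)‖ := by
    intro n
    have := htnorm n 0
    simpa using this
  have hpt0 : ∀ n k : ℤ, ‖G n k (h k)‖ ≤ (K * M₀) * ee α n k := by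
    intro n k
    have := hptnorm n 0 k
    simpa using this
  -- boundedness of y
  have hy_bound : ∀ n : ℤ, ‖∑' k : ℤ, G n k (h k)‖ ≤ K * M₀ * CC α := by
    intro n
    calc ‖∑' k : ℤ, G n k (h k)‖ ≤ ∑' k : ℤ, ‖G n k (h k)‖ :=
        norm_tsum_le_tsum_norm (htnorm0 n)
      _ ≤ ∑' k : ℤ, (K * M₀) * ee α n k :=
        Summable.tsum_le_tsum (fun k => hpt0 n k) (htnorm0 n) ((summable_ee hα n).mul_left _)
      _ = (K * M₀) * CC α := by rw [tsum_mul_left, tsum_ee hα]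
      _ = K * M₀ * CC α := by ring
  -- relative density of approximate-period balls
  have hrd1 : ∀ ε > (0:ℝ), RelDenseZ {τ : ℤ | d1 h τ 0 < ε} := by
    intro ε hε
    have hset : {τ : ℤ | limsup (fun n => ‖h (n + τ) - h n‖) (cocompact ℤ) < ε}
        = {τ : ℤ | d1 h τ 0 < ε} := by
      ext τ
      simp only [Set.mem_setOf_eq, d1, cocompact_eq_cofinite, add_zero]
    rw [← hset]; exact hhrd ε hε
  have hrd2 : ∀ ε > (0:ℝ), RelDenseZ {τ : ℤ | d2 G τ 0 < ε} := by
    intro ε hε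
    obtain ⟨S, hSrd, hS⟩ := hbi (ε/2) (by positivity)
    refine relDense_mono (fun τ hτ => ?_) hSrd
    have h1 := hS τ hτ
    rw [cocompact_eq_cofinite] at h1
    show d2 G τ 0 < ε
    have heq : d2 G τ 0
        = limsup (fun n : ℤ => ∑' k : ℤ, ‖G (n + τ) (k + τ) - G n k‖) cofinite := by
      simp only [d2, add_zero]
    rw [heq]
    exact lt_of_le_of_lt h1 (by linarith)
  have hball := ball_rd (d1 h) (d2 G) (d1_sym h) (d1_tri hM₀) (d1_inv h) (d2_sym G)
    (d2_tri hα hK0 hG') (d2_inv G) hrd1 hrd2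
  constructor
  · exact ⟨K * M₀ * CC α, fun n => hy_bound n⟩
  intro ε hε
  set D : ℝ := M₀ + K * CC α + 1 with hD
  have hD0 : 0 < D := by nlinarith [mul_pos hK0 hCC0]
  set δ : ℝ := ε / D with hδdef
  have hδ0 : 0 < δ := div_pos hε hD0
  refine relDense_mono (fun τ hτ => ?_) (hball δ hδ0)
  obtain ⟨h1τ, h2τ⟩ := hτ
  simp only [Set.mem_setOf_eq, cocompact_eq_cofinite]
  -- extract the two smallness facts
  have hd1τ : limsup (fun n : ℤ => ‖h (n + τ) - h n‖) cofinite < δ := by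
    have heq : d1 h τ 0 = limsup (fun n : ℤ => ‖h (n + τ) - h n‖) cofinite := by
      simp only [d1, add_zero]
    rwa [heq] at h1τ
  have hd2τ : limsup (fun n : ℤ => ∑' k : ℤ, ‖G (n + τ) (k + τ) - G n k‖) cofinite < δ := by
    have heq : d2 G τ 0
        = limsup (fun n : ℤ => ∑' k : ℤ, ‖G (n + τ) (k + τ) - G n k‖) cofinite := by
      simp only [d2, add_zero]
    rwa [heq] at h2τ
  have hSGsum : ∀ n : ℤ, Summable fun k : ℤ => ‖G (n + τ) (k + τ) - G n k‖ := by
    intro n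
    have := d2_summand_summable (G := G) hα hG' τ 0 n
    simp only [add_zero] at this
    exact this
  have hSGbd : ∀ n : ℤ, (∑' k : ℤ, ‖G (n + τ) (k + τ) - G n k‖) ≤ 2 * (K * CC α) := by
    intro n
    have := d2_summand_bound (G := G) hα hK0 hG' τ 0 n
    simp only [add_zero] at this
    exact this
  -- finite exceptional set for h
  have hevh : ∀ᶠ k in (cofinite : Filter ℤ), ‖h (k + τ) - h k‖ < δ :=
    eventually_lt_of_limsup_lt hd1τ
      (bddu (fun n => (norm_sub_le _ _).trans (add_le_add (hM₀ _) (hM₀ _))))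
  rw [eventually_cofinite] at hevh
  set Efin : Finset ℤ := hevh.toFinset with hEdef
  have hEmem : ∀ k : ℤ, k ∉ Efin → ‖h (k + τ) - h k‖ ≤ δ := by
    intro k hk
    rw [hEdef, Set.Finite.mem_toFinset] at hk
    simp only [Set.mem_setOf_eq, not_not] at hk
    exact hk.le
  -- the correction term φ
  have hφ0 : ∀ n : ℤ, 0 ≤ ∑ k ∈ Efin, (2 * M₀) * (K * ee α n k) :=
    fun n => Finset.sum_nonneg fun k _ => mul_nonneg (by linarith) (hKee0 n k)
  have hφbd : ∀ n : ℤ, (∑ k ∈ Efin, (2 * M₀) * (K * ee α n k))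
      ≤ (Efin.card : ℝ) * ((2 * M₀) * K) := by
    intro n
    calc (∑ k ∈ Efin, (2 * M₀) * (K * ee α n k)) ≤ ∑ _k ∈ Efin, (2 * M₀) * K :=
        Finset.sum_le_sum (fun k _ => by
          have h1 := ee_le_one hα n k
          nlinarith [mul_nonneg (mul_nonneg hM₀0 hK0.le) (sub_nonneg.mpr h1)])
      _ = (Efin.card : ℝ) * ((2 * M₀) * K) := by rw [Finset.sum_const, nsmul_eq_mul]
  have hφlim : Tendsto (fun n : ℤ => ∑ k ∈ Efin, (2 * M₀) * (K * ee α n k))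
      cofinite (𝓝 0) := by
    have h0 := tendsto_finset_sum Efin
      (fun k (_ : k ∈ Efin) => ((tendsto_ee hα k).const_mul K).const_mul (2 * M₀))
    simpa using h0
  -- the T-term estimate
  have hTsum : ∀ n : ℤ, Summable fun k : ℤ => ‖G n k‖ * ‖h (k + τ) - h k‖ := by
    intro n
    refine Summable.of_nonneg_of_le (fun k => mul_nonneg (norm_nonneg _) (norm_nonneg _))
      (fun k => ?_) ((summable_ee hα n).mul_left ((2 * M₀) * K))
    calc ‖G n k‖ * ‖h (k + τ) - h k‖ ≤ (K * ee α n k) * (M₀ + M₀) :=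
        mul_le_mul (hG' n k) ((norm_sub_le _ _).trans (add_le_add (hM₀ _) (hM₀ _)))
          (norm_nonneg _) (hKee0 n k)
      _ = ((2 * M₀) * K) * ee α n k := by ring
  have hT : ∀ n : ℤ, (∑' k : ℤ, ‖G n k‖ * ‖h (k + τ) - h k‖)
      ≤ (∑ k ∈ Efin, (2 * M₀) * (K * ee α n k)) + δ * (K * CC α) := by
    intro n
    have hg1sum : Summable (fun k : ℤ => if k ∈ Efin then (2 * M₀) * (K * ee α n k) else 0) :=
      summable_of_ne_finset_zero (s := Efin) (fun k hk => if_neg hk)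
    have hg2sum : Summable (fun k : ℤ => δ * (K * ee α n k)) :=
      ((summable_ee hα n).mul_left K).mul_left δ
    have hle : ∀ k : ℤ, ‖G n k‖ * ‖h (k + τ) - h k‖
        ≤ (if k ∈ Efin then (2 * M₀) * (K * ee α n k) else 0) + δ * (K * ee α n k) := by
      intro k
      by_cases hk : k ∈ Efin
      · rw [if_pos hk]
        have hb : ‖G n k‖ * ‖h (k + τ) - h k‖ ≤ (K * ee α n k) * (M₀ + M₀) :=
          mul_le_mul (hG' n k) ((norm_sub_le _ _).trans (add_le_add (hM₀ _) (hM₀ _)))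
            (norm_nonneg _) (hKee0 n k)
        have hpos : 0 ≤ δ * (K * ee α n k) := mul_nonneg hδ0.le (hKee0 n k)
        nlinarith
      · rw [if_neg hk]
        calc ‖G n k‖ * ‖h (k + τ) - h k‖ ≤ (K * ee α n k) * δ :=
            mul_le_mul (hG' n k) (hEmem k hk) (norm_nonneg _) (hKee0 n k)
          _ = 0 + δ * (K * ee α n k) := by ring
    calc (∑' k : ℤ, ‖G n k‖ * ‖h (k + τ) - h k‖)
        ≤ ∑' k : ℤ, ((if k ∈ Efin then (2 * M₀) * (K * ee α n k) else 0)
            + δ * (K * ee α n k)) := Summable.tsum_le_tsum hle (hTsum n) (hg1sum.add hg2sum)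
      _ = (∑' k : ℤ, if k ∈ Efin then (2 * M₀) * (K * ee α n k) else 0)
            + ∑' k : ℤ, δ * (K * ee α n k) := Summable.tsum_add hg1sum hg2sum
      _ = (∑ k ∈ Efin, (2 * M₀) * (K * ee α n k)) + δ * (K * CC α) := by
          congr 1
          · rw [tsum_eq_sum (s := Efin) (fun k hk => if_neg hk)]
            exact Finset.sum_congr rfl (fun k hk => if_pos hk)
          · rw [tsum_mul_left, tsum_mul_left, tsum_ee hα]
  -- the main pointwise estimate
  have hyb : ∀ n : ℤ,
      ‖(∑' k : ℤ, G (n + τ) k (h k)) - ∑' k : ℤ, G n k (h k)‖ ≤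
        M₀ * (∑' k : ℤ, ‖G (n + τ) (k + τ) - G n k‖)
          + ∑' k : ℤ, ‖G n k‖ * ‖h (k + τ) - h k‖ := by
    intro n
    have hre : (∑' k : ℤ, G (n + τ) k (h k)) = ∑' k : ℤ, G (n + τ) (k + τ) (h (k + τ)) := by
      rw [← (Equiv.addRight τ).tsum_eq (fun k : ℤ => G (n + τ) k (h k))]
      exact tsum_congr fun k => by simp [Equiv.coe_addRight]
    have hs1 : Summable fun k : ℤ => G (n + τ) (k + τ) (h (k + τ)) := hterm n τ
    have hs2 : Summable fun k : ℤ => G n k (h k) := hterm0 n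
    have hsub : (∑' k : ℤ, G (n + τ) k (h k)) - (∑' k : ℤ, G n k (h k))
        = ∑' k : ℤ, (G (n + τ) (k + τ) (h (k + τ)) - G n k (h k)) := by
      rw [hre, ← Summable.tsum_sub hs1 hs2]
    have hptk : ∀ k : ℤ, ‖G (n + τ) (k + τ) (h (k + τ)) - G n k (h k)‖ ≤
        M₀ * ‖G (n + τ) (k + τ) - G n k‖ + ‖G n k‖ * ‖h (k + τ) - h k‖ := by
      intro k
      have hdec : G (n + τ) (k + τ) (h (k + τ)) - G n k (h k)
          = (G (n + τ) (k + τ) - G n k) (h (k + τ)) + G n k (h (k + τ) - h k) := by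
        simp only [ContinuousLinearMap.sub_apply, map_sub]
        abel
      rw [hdec]
      refine (norm_add_le _ _).trans (add_le_add ?_ (ContinuousLinearMap.le_opNorm _ _))
      calc ‖(G (n + τ) (k + τ) - G n k) (h (k + τ))‖
          ≤ ‖G (n + τ) (k + τ) - G n k‖ * ‖h (k + τ)‖ := ContinuousLinearMap.le_opNorm _ _
        _ ≤ ‖G (n + τ) (k + τ) - G n k‖ * M₀ :=
            mul_le_mul_of_nonneg_left (hM₀ _) (norm_nonneg _)
        _ = M₀ * ‖G (n + τ) (k + τ) - G n k‖ := mul_comm _ _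
    have hnorm_sum : Summable fun k : ℤ => ‖G (n + τ) (k + τ) (h (k + τ)) - G n k (h k)‖ :=
      Summable.of_nonneg_of_le (fun k => norm_nonneg _) hptk
        (((hSGsum n).mul_left M₀).add (hTsum n))
    calc ‖(∑' k : ℤ, G (n + τ) k (h k)) - ∑' k : ℤ, G n k (h k)‖
        = ‖∑' k : ℤ, (G (n + τ) (k + τ) (h (k + τ)) - G n k (h k))‖ := by rw [hsub]
      _ ≤ ∑' k : ℤ, ‖G (n + τ) (k + τ) (h (k + τ)) - G n k (h k)‖ :=
          norm_tsum_le_tsum_norm hnorm_sum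
      _ ≤ ∑' k : ℤ, (M₀ * ‖G (n + τ) (k + τ) - G n k‖ + ‖G n k‖ * ‖h (k + τ) - h k‖) :=
          Summable.tsum_le_tsum hptk hnorm_sum (((hSGsum n).mul_left M₀).add (hTsum n))
      _ = M₀ * (∑' k : ℤ, ‖G (n + τ) (k + τ) - G n k‖)
            + ∑' k : ℤ, ‖G n k‖ * ‖h (k + τ) - h k‖ := by
          rw [Summable.tsum_add ((hSGsum n).mul_left M₀) (hTsum n), tsum_mul_left]
  -- eventual bound
  have hev2 : ∀ᶠ n in (cofinite : Filter ℤ),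
      ‖(∑' k : ℤ, G (n + τ) k (h k)) - ∑' k : ℤ, G n k (h k)‖ ≤
        (M₀ * δ + δ * (K * CC α)) + ∑ k ∈ Efin, (2 * M₀) * (K * ee α n k) := by
    have hevSG := eventually_lt_of_limsup_lt hd2τ (bddu hSGbd)
    filter_upwards [hevSG] with n hn
    calc ‖(∑' k : ℤ, G (n + τ) k (h k)) - ∑' k : ℤ, G n k (h k)‖
        ≤ M₀ * (∑' k : ℤ, ‖G (n + τ) (k + τ) - G n k‖)
            + ∑' k : ℤ, ‖G n k‖ * ‖h (k + τ) - h k‖ := hyb n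
      _ ≤ M₀ * δ + ((∑ k ∈ Efin, (2 * M₀) * (K * ee α n k)) + δ * (K * CC α)) :=
          add_le_add (mul_le_mul_of_nonneg_left hn.le hM₀0) (hT n)
      _ = (M₀ * δ + δ * (K * CC α)) + ∑ k ∈ Efin, (2 * M₀) * (K * ee α n k) := by ring
  have hlimφ : limsup (fun n : ℤ =>
        (M₀ * δ + δ * (K * CC α)) + ∑ k ∈ Efin, (2 * M₀) * (K * ee α n k)) cofinite
      = M₀ * δ + δ * (K * CC α) := by
    have ht : Tendsto (fun n : ℤ =>
        (M₀ * δ + δ * (K * CC α)) + ∑ k ∈ Efin, (2 * M₀) * (K * ee α n k)) cofinite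
        (𝓝 ((M₀ * δ + δ * (K * CC α)) + 0)) := tendsto_const_nhds.add hφlim
    rw [add_zero] at ht
    exact ht.limsup_eq
  have hfinal : limsup (fun n : ℤ =>
      ‖(∑' k : ℤ, G (n + τ) k (h k)) - ∑' k : ℤ, G n k (h k)‖) cofinite
      ≤ M₀ * δ + δ * (K * CC α) := by
    have hstep := limsup_le_limsup hev2 (cobddu (fun n => norm_nonneg _))
      (bddu (C := (M₀ * δ + δ * (K * CC α)) + (Efin.card : ℝ) * ((2 * M₀) * K))
        (fun n => add_le_add le_rfl (hφbd n)))
    rw [hlimφ] at hstep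
    exact hstep
  calc limsup (fun n : ℤ =>
      ‖(∑' k : ℤ, G (n + τ) k (h k)) - ∑' k : ℤ, G n k (h k)‖) cofinite
      ≤ M₀ * δ + δ * (K * CC α) := hfinal
    _ = δ * (M₀ + K * CC α) := by ring
    _ < δ * D := by rw [hD]; nlinarith
    _ = ε := by rw [hδdef]; field_simp
end

section
/- Let α > 0 and K ≥ 1 and let h : ℤ → ℝ^q be a bounded sequence. Suppose τ ∈ ℤ satisfies limsup_{|n|→∞} ‖h(n+τ) − h(n)‖ < ε'. Then limsup_{|n|→∞} ∑_{k∈ℤ} e^{−α|n−k|} ‖h(k+τ) − h(k)‖ ≤ ε' · (1 + e^{−α})/(1 − e^{−α}). -/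
open Filter

-- weight function on ℤ
noncomputable def W (α : ℝ) (m : ℤ) : ℝ := Real.exp (-α * |(m : ℝ)|)

lemma W_nonneg (α : ℝ) (m : ℤ) : 0 ≤ W α m := (Real.exp_pos _).le

lemma W_nat (α : ℝ) (n : ℕ) : W α n = Real.exp (-α) ^ n := by
  simp [W, ← Real.exp_nat_mul]
  ring_nf

lemma W_neg_nat (α : ℝ) (n : ℕ) : W α (-n) = Real.exp (-α) ^ n := by
  simp [W, ← Real.exp_nat_mul]
  ring_nf

lemma summable_W (α : ℝ) (hα : 0 < α) : Summable (W α) := by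
  have hr : Real.exp (-α) < 1 := Real.exp_lt_one_iff.mpr (by linarith)
  have hg : Summable (fun n : ℕ => Real.exp (-α) ^ n) :=
    summable_geometric_of_lt_one (Real.exp_nonneg _) hr
  exact Summable.of_nat_of_neg (by simpa [W_nat] using hg) (by simpa [W_neg_nat] using hg)

lemma tsum_W (α : ℝ) (hα : 0 < α) :
    ∑' m : ℤ, W α m = (1 + Real.exp (-α)) / (1 - Real.exp (-α)) := by
  have hr : Real.exp (-α) < 1 := Real.exp_lt_one_iff.mpr (by linarith)
  have hg : Summable (fun n : ℕ => Real.exp (-α) ^ n) :=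
    summable_geometric_of_lt_one (Real.exp_nonneg _) hr
  have h1 : Summable (fun n : ℕ => W α n) := by simpa [W_nat] using hg
  have h2 : Summable (fun n : ℕ => W α (-n)) := by simpa [W_neg_nat] using hg
  have := Summable.tsum_of_nat_of_neg h1 h2
  have e1 : ∑' n : ℕ, W α n = (1 - Real.exp (-α))⁻¹ := by
    simp only [W_nat]; exact tsum_geometric_of_lt_one (Real.exp_nonneg _) hr
  have e2 : ∑' n : ℕ, W α (-n) = (1 - Real.exp (-α))⁻¹ := by
    simp only [W_neg_nat]; exact tsum_geometric_of_lt_one (Real.exp_nonneg _) hr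
  have e0 : W α 0 = 1 := by simp [W]
  rw [this, e1, e2, e0]
  have h1r : 1 - Real.exp (-α) ≠ 0 := by linarith
  field_simp
  ring

lemma W_eq (α : ℝ) (n k : ℤ) :
    Real.exp (-α * |(n : ℝ) - (k : ℝ)|) = W α (n - k) := by
  simp only [W]; push_cast; ring_nf

lemma summable_W_shift (α : ℝ) (hα : 0 < α) (n : ℤ) :
    Summable (fun k : ℤ => W α (n - k)) :=
  ((Equiv.subLeft n).summable_iff (f := W α)).mpr (summable_W α hα)

lemma tsum_W_shift (α : ℝ) (hα : 0 < α) (n : ℤ) :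
    ∑' k : ℤ, W α (n - k) = (1 + Real.exp (-α)) / (1 - Real.exp (-α)) := by
  rw [← tsum_W α hα]
  exact (Equiv.subLeft n).tsum_eq (W α)

-- tendsto |(n:ℝ)| → ∞ along cofinite on ℤ
lemma tendsto_abs_cofinite : Tendsto (fun n : ℤ => |(n : ℝ)|) cofinite atTop := by
  rw [Int.cofinite_eq]
  refine Tendsto.sup ?_ ?_
  · exact tendsto_abs_atBot_atTop.comp (tendsto_intCast_atBot_iff.2 tendsto_id)
  · exact tendsto_abs_atTop_atTop.comp tendsto_intCast_atTop_atTop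

lemma tendsto_W_shift (α : ℝ) (hα : 0 < α) (k : ℤ) :
    Tendsto (fun n : ℤ => W α (n - k)) cofinite (nhds 0) := by
  have h1 : Tendsto (fun n : ℤ => |((n - k : ℤ) : ℝ)|) cofinite atTop := by
    refine tendsto_atTop_mono (fun n => ?_) (tendsto_atTop_add_const_right _ (-|(k:ℝ)|)
      tendsto_abs_cofinite)
    push_cast
    have := abs_sub_abs_le_abs_sub (n : ℝ) (k : ℝ)
    linarith
  have hm : Tendsto (fun t : ℝ => -α * t) atTop atBot := by
    have := (tendsto_const_mul_atTop_of_pos hα).2 (tendsto_id (α := ℝ))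
    exact (tendsto_neg_atTop_atBot.comp this).congr (fun t => by simp)
  exact (Real.tendsto_exp_atBot.comp hm).comp h1


/-- a limsup bound on translation differences of `h` yields the
corresponding limsup bound on the exponentially weighted sums. -/
theorem stmt9 {q : ℕ} (α K : ℝ) (hα : 0 < α) (hK : 1 ≤ K)
    (h : ℤ → EuclideanSpace ℝ (Fin q)) (hb : ∃ M, ∀ k, ‖h k‖ ≤ M)
    (ε' : ℝ) (τ : ℤ)
    (hτ : limsup (fun n : ℤ => ‖h (n + τ) - h n‖) (cocompact ℤ) < ε') :
    limsup (fun n : ℤ =>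
        ∑' k : ℤ, Real.exp (-α * |(n : ℝ) - (k : ℝ)|) * ‖h (k + τ) - h k‖)
      (cocompact ℤ)
      ≤ ε' * (1 + Real.exp (-α)) / (1 - Real.exp (-α)) := by
  obtain ⟨M, hM⟩ := hb
  set r := Real.exp (-α) with hrdef
  set C := (1 + r) / (1 - r) with hCdef
  have hr1 : r < 1 := Real.exp_lt_one_iff.mpr (by linarith)
  have hr0 : 0 < r := Real.exp_pos _
  set g : ℤ → ℝ := fun n => ‖h (n + τ) - h n‖ with hgdef
  have hgnn : ∀ n, 0 ≤ g n := fun n => norm_nonneg _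
  have hgB : ∀ n, g n ≤ M + M := fun n => (norm_sub_le _ _).trans (add_le_add (hM _) (hM _))
  rw [cocompact_eq_cofinite] at hτ ⊢
  have hbdd : IsBoundedUnder (· ≤ ·) (cofinite : Filter ℤ) g := isBoundedUnder_of ⟨M + M, hgB⟩
  have hε : 0 < ε' :=
    lt_of_le_of_lt (le_limsup_of_frequently_le ((Eventually.of_forall hgnn).frequently) hbdd) hτ
  have hev : ∀ᶠ n in (cofinite : Filter ℤ), g n < ε' := eventually_lt_of_limsup_lt hτ hbdd
  have hT : {n : ℤ | ¬ g n < ε'}.Finite := Filter.eventually_cofinite.mp hev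
  set F : Finset ℤ := hT.toFinset with hFdef
  -- rewrite the function
  have hWs : ∀ n : ℤ, Summable (fun k : ℤ => W α (n - k)) := summable_W_shift α hα
  have hS : ∀ n : ℤ, Summable (fun k : ℤ => W α (n - k) * g k) := fun n =>
    Summable.of_nonneg_of_le (fun k => mul_nonneg (W_nonneg _ _) (hgnn k))
      (fun k => mul_le_mul_of_nonneg_left (hgB k) (W_nonneg _ _))
      ((hWs n).mul_right (M + M))
  have hfun : (fun n : ℤ => ∑' k : ℤ, Real.exp (-α * |(n : ℝ) - (k : ℝ)|) * ‖h (k + τ) - h k‖)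
      = fun n : ℤ => ∑' k : ℤ, W α (n - k) * g k := by
    funext n
    exact tsum_congr fun k => by rw [W_eq]
  rw [hfun]
  have hSnn : ∀ n : ℤ, 0 ≤ ∑' k : ℤ, W α (n - k) * g k := fun n =>
    tsum_nonneg fun k => mul_nonneg (W_nonneg _ _) (hgnn k)
  have key : ∀ δ : ℝ, 0 < δ →
      limsup (fun n : ℤ => ∑' k : ℤ, W α (n - k) * g k) cofinite ≤ ε' * C + δ := by
    intro δ hδ
    refine limsup_le_of_le (isCoboundedUnder_le_of_le _ hSnn) ?_
    have htend : Tendsto (fun n : ℤ => ∑ k ∈ F, W α (n - k) * g k) cofinite (nhds 0) := by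
      have := tendsto_finset_sum F (fun k (_ : k ∈ F) => ((tendsto_W_shift α hα k).mul_const (g k)))
      simpa using this
    filter_upwards [htend.eventually_lt_const hδ] with n hn
    have hsplit := Summable.sum_add_tsum_compl (s := F) (hS n)
    rw [← hsplit]
    have hcompl : ∑' k : ↑((↑F : Set ℤ)ᶜ), W α (n - (k : ℤ)) * g k ≤ ε' * C := by
      have step1 : ∑' k : ↑((↑F : Set ℤ)ᶜ), W α (n - (k : ℤ)) * g k
          ≤ ∑' k : ↑((↑F : Set ℤ)ᶜ), W α (n - (k : ℤ)) * ε' := by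
        refine Summable.tsum_le_tsum ?_ ((hS n).subtype _) (((hWs n).mul_right ε').subtype _)
        rintro ⟨k, hk⟩
        refine mul_le_mul_of_nonneg_left ?_ (W_nonneg _ _)
        have hk' : k ∉ F := by simpa using hk
        have hnn : ¬ ¬ g k < ε' := fun hh => hk' (hT.mem_toFinset.mpr hh)
        exact (not_not.mp hnn).le
      have step2 : ∑' k : ↑((↑F : Set ℤ)ᶜ), W α (n - (k : ℤ)) * ε'
          ≤ ∑' k : ℤ, W α (n - k) * ε' :=
        Summable.tsum_le_tsum_of_inj Subtype.val Subtype.coe_injective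
          (fun c _ => mul_nonneg (W_nonneg _ _) hε.le)
          (fun b => le_rfl) (((hWs n).mul_right ε').subtype _) ((hWs n).mul_right ε')
      have step3 : ∑' k : ℤ, W α (n - k) * ε' = ε' * C := by
        rw [tsum_mul_right, tsum_W_shift α hα n, mul_comm]
      linarith
    linarith
  have hfin : limsup (fun n : ℤ => ∑' k : ℤ, W α (n - k) * g k) cofinite ≤ ε' * C :=
    le_of_forall_pos_le_add key
  calc limsup (fun n : ℤ => ∑' k : ℤ, W α (n - k) * g k) cofinite ≤ ε' * C := hfin
    _ = ε' * (1 + r) / (1 - r) := by rw [hCdef, mul_div_assoc]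
end

section
/- Let a : ℝ → ℝ be bounded, continuous, and satisfy |e^{∫_s^t a(r)dr}| ≤ K e^{−γ(t−s)} for all t ≥ s with K ≥ 1, γ > 0. Suppose τ ∈ ℝ is such that limsup_{|t|→∞} sup_{u ∈ (t,∞)} |a(u+τ) − a(u)| < ε·γ²/K². Then limsup_{t→∞} ∫_{−∞}^t |e^{∫_{s+τ}^{t+τ} a(r)dr} − e^{∫_s^t a(r)dr}| ds ≤ ε. -/
open Filter

lemma exp_sub_exp_le' {X Y : ℝ} (h : Y ≤ X) :
    Real.exp X - Real.exp Y ≤ (X - Y) * Real.exp X := by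
  set z := X - Y with hz
  have hz0 : 0 ≤ z := sub_nonneg.2 h
  have h1 : -z + 1 ≤ Real.exp (-z) := Real.add_one_le_exp (-z)
  have h2 : Real.exp (-z) * Real.exp z = 1 := by
    rw [← Real.exp_add]; simp
  have h3 : Real.exp X = Real.exp Y * Real.exp z := by
    rw [← Real.exp_add]; congr 1; simp [hz]
  nlinarith [Real.exp_pos z, Real.exp_pos Y, mul_le_mul_of_nonneg_right h1 (Real.exp_pos z).le]

lemma exp_sub_exp_abs_le (X Y : ℝ) :
    |Real.exp X - Real.exp Y| ≤ |X - Y| * max (Real.exp X) (Real.exp Y) := by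
  rcases le_total Y X with h | h
  · rw [abs_of_nonneg (sub_nonneg.2 (Real.exp_le_exp.2 h)), abs_of_nonneg (sub_nonneg.2 h)]
    exact (exp_sub_exp_le' h).trans
      (mul_le_mul_of_nonneg_left (le_max_left _ _) (sub_nonneg.2 h))
  · rw [abs_sub_comm, abs_sub_comm X Y,
      abs_of_nonneg (sub_nonneg.2 (Real.exp_le_exp.2 h)), abs_of_nonneg (sub_nonneg.2 h)]
    exact (exp_sub_exp_le' h).trans
      (mul_le_mul_of_nonneg_left (le_max_right _ _) (sub_nonneg.2 h))

/-- The improper integral `∫_{-∞}^t (t-s) e^{-γ(t-s)} ds = γ⁻²`, with integrability. -/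
lemma aux_integrable_and_integral {γ : ℝ} (hγ : 0 < γ) (t : ℝ) :
    MeasureTheory.IntegrableOn (fun s => (t - s) * Real.exp (-γ * (t - s))) (Set.Iic t) ∧
      ∫ s in Set.Iic t, (t - s) * Real.exp (-γ * (t - s)) = 1 / γ ^ 2 := by
  have hγ' : γ ≠ 0 := ne_of_gt hγ
  set g : ℝ → ℝ := fun x => -((t + x) / γ + 1 / γ ^ 2) * Real.exp (-γ * (t + x)) with hg
  set g' : ℝ → ℝ := fun x => (t + x) * Real.exp (-γ * (t + x)) with hg'
  have hderiv : ∀ x ∈ Set.Ici (-t), HasDerivAt g (g' x) x := by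
    intro x _
    have d1 : HasDerivAt (fun x : ℝ => -((t + x) / γ + 1 / γ ^ 2)) (-(1/γ)) x :=
      ((((hasDerivAt_id x).const_add t).div_const γ).add_const _).neg
    have d2 := ((((hasDerivAt_id x).const_add t).const_mul (-γ)).exp :
      HasDerivAt (fun x : ℝ => Real.exp (-γ * (t + id x))) _ x)
    simp only [id_eq] at d2
    have : HasDerivAt g _ x := d1.mul d2
    convert this using 1
    rw [hg']
    field_simp
    ring
  have hpos : ∀ x ∈ Set.Ioi (-t), 0 ≤ g' x := by
    intro x hx
    have : 0 ≤ t + x := by simp only [Set.mem_Ioi] at hx; linarith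
    exact mul_nonneg this (Real.exp_pos _).le
  have htend : Tendsto g atTop (nhds 0) := by
    have T1 : Tendsto (fun x : ℝ => γ * (t + x)) atTop atTop :=
      (tendsto_atTop_add_const_left atTop t tendsto_id).const_mul_atTop hγ
    have P : Tendsto (fun x : ℝ => (γ * (t + x)) ^ 1 * Real.exp (-(γ * (t + x)))) atTop (nhds 0) :=
      (Real.tendsto_pow_mul_exp_neg_atTop_nhds_zero 1).comp T1
    have E : Tendsto (fun x : ℝ => Real.exp (-(γ * (t + x)))) atTop (nhds 0) :=
      Real.tendsto_exp_atBot.comp (tendsto_neg_atTop_atBot.comp T1)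
    have comb := (P.const_mul (-(1/γ^2))).add (E.const_mul (-(1/γ^2)))
    simp only [mul_zero, add_zero] at comb
    refine comb.congr (fun x => ?_)
    simp only [hg, pow_one, neg_mul]
    field_simp
    ring
  have hint : MeasureTheory.IntegrableOn g' (Set.Ioi (-t)) :=
    MeasureTheory.integrableOn_Ioi_deriv_of_nonneg' hderiv hpos htend
  have hval : ∫ x in Set.Ioi (-t), g' x = 0 - g (-t) :=
    MeasureTheory.integral_Ioi_of_hasDerivAt_of_nonneg' hderiv hpos htend
  have hgmt : g (-t) = -(1 / γ ^ 2) := by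
    simp [hg]
  have key : (fun s => (t - s) * Real.exp (-γ * (t - s))) = fun s => g' (-s) := by
    funext s; simp only [hg', sub_eq_add_neg]
  constructor
  · rw [key]
    have h_map_neg : (MeasureTheory.volume.restrict (Set.Ici (-t))).map Neg.neg
        = MeasureTheory.volume.restrict (Set.Iic t) := by
      conv => rhs; rw [← MeasureTheory.Measure.map_neg_eq_self
        (MeasureTheory.volume : MeasureTheory.Measure ℝ), measurableEmbedding_neg.restrict_map]
      congr 1
      ext x; simp [neg_le]
    rw [MeasureTheory.IntegrableOn, ← h_map_neg, measurableEmbedding_neg.integrable_map_iff]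
    have : ((fun s => g' (-s)) ∘ Neg.neg) = g' := by funext x; simp
    rw [this]
    exact Iff.mpr integrableOn_Ici_iff_integrableOn_Ioi hint
  · rw [key, integral_comp_neg_Iic, hval, hgmt]
    ring

/-- under the dichotomy bound, a remote translation estimate at
infinity for `a` yields the integrated remote estimate for the exponentials. -/
theorem stmt13 (a : ℝ → ℝ) (hc : Continuous a) (hb : ∃ M, ∀ t, |a t| ≤ M)
    (K γ : ℝ) (hK : 1 ≤ K) (hγ : 0 < γ)
    (hdich : ∀ s t : ℝ, s ≤ t →
      |Real.exp (∫ r in s..t, a r)| ≤ K * Real.exp (-γ * (t - s)))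
    (ε τ : ℝ) (hε : 0 < ε)
    (hτ : limsup (fun t : ℝ => ⨆ u ∈ Set.Ioi t, |a (u + τ) - a u|) (cocompact ℝ)
      < ε * γ ^ 2 / K ^ 2) :
    limsup (fun t : ℝ => ∫ s in Set.Iic t,
        |Real.exp (∫ r in (s + τ)..(t + τ), a r) - Real.exp (∫ r in s..t, a r)|)
      atTop ≤ ε := by
  obtain ⟨M, hM⟩ := hb
  have hM0 : 0 ≤ M := (abs_nonneg (a 0)).trans (hM 0)
  have hK0 : (0:ℝ) < K := lt_of_lt_of_le one_pos hK
  set δ : ℝ := ε * γ ^ 2 / K ^ 2 with hδdef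
  have hg2M : ∀ u : ℝ, |a (u + τ) - a u| ≤ 2 * M := by
    intro u
    calc |a (u + τ) - a u| ≤ |a (u + τ)| + |a u| := abs_sub _ _
    _ ≤ 2 * M := by have := hM (u + τ); have := hM u; linarith
  have hbdd : ∀ t : ℝ, BddAbove ((fun u => |a (u + τ) - a u|) '' Set.Ioi t) := by
    intro t
    exact ⟨2 * M, by rintro x ⟨u, _, rfl⟩; exact hg2M u⟩
  have hF_le : ∀ t : ℝ, (⨆ u ∈ Set.Ioi t, |a (u + τ) - a u|) ≤ 2 * M := by
    intro t
    refine Real.iSup_le (fun u => Real.iSup_le (fun _ => hg2M u) (by linarith)) (by linarith)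
  have hev : ∀ᶠ t in cocompact ℝ, (⨆ u ∈ Set.Ioi t, |a (u + τ) - a u|) < δ :=
    eventually_lt_of_limsup_lt hτ (isBoundedUnder_of ⟨2 * M, hF_le⟩)
  have hev2 : ∀ᶠ t in atBot, (⨆ u ∈ Set.Ioi t, |a (u + τ) - a u|) < δ :=
    hev.filter_mono atBot_le_cocompact
  obtain ⟨T, hT⟩ := eventually_atBot.1 hev2
  have hglob : ∀ u : ℝ, |a (u + τ) - a u| ≤ δ := by
    intro u
    have h2 : u ∈ Set.Ioi (min T (u - 1)) :=
      lt_of_le_of_lt (min_le_right _ _) (by linarith : u - 1 < u)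
    have hb2 : BddAbove (Set.range fun v =>
        ⨆ _ : v ∈ Set.Ioi (min T (u - 1)), |a (v + τ) - a v|) := by
      refine ⟨2 * M, ?_⟩
      rintro x ⟨v, rfl⟩
      exact Real.iSup_le (fun _ => hg2M v) (by linarith)
    have h3 : |a (u + τ) - a u|
        ≤ ⨆ v ∈ Set.Ioi (min T (u - 1)), |a (v + τ) - a v| := by
      have := le_ciSup hb2 u
      rwa [ciSup_pos h2] at this
    exact h3.trans (hT _ (min_le_left _ _)).le
  have hδ0 : 0 ≤ δ := le_trans (abs_nonneg _) (hglob 0)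
  -- pointwise key estimate
  have key : ∀ t s : ℝ, s ≤ t →
      |Real.exp (∫ r in (s + τ)..(t + τ), a r) - Real.exp (∫ r in s..t, a r)| ≤
        K * δ * ((t - s) * Real.exp (-γ * (t - s))) := by
    intro t s hst
    set X := ∫ r in (s + τ)..(t + τ), a r with hX
    set Y := ∫ r in s..t, a r with hY
    have hXeq : X = ∫ r in s..t, a (r + τ) := (intervalIntegral.integral_comp_add_right a τ).symm
    have hint1 : IntervalIntegrable (fun r => a (r + τ)) MeasureTheory.volume s t :=
      (hc.comp (continuous_add_right τ)).intervalIntegrable s t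
    have hint2 : IntervalIntegrable a MeasureTheory.volume s t := hc.intervalIntegrable s t
    have hXY : |X - Y| ≤ δ * (t - s) := by
      have : X - Y = ∫ r in s..t, (a (r + τ) - a r) := by
        rw [hXeq, hY, intervalIntegral.integral_sub hint1 hint2]
      rw [this]
      have := intervalIntegral.norm_integral_le_of_norm_le_const
        (C := δ) (f := fun r => a (r + τ) - a r) (a := s) (b := t)
        (fun x _ => by simpa using hglob x)
      rwa [Real.norm_eq_abs, abs_of_nonneg (by linarith : (0:ℝ) ≤ t - s)] at this
    have hEX : Real.exp X ≤ K * Real.exp (-γ * (t - s)) := by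
      have := hdich (s + τ) (t + τ) (by linarith)
      rw [abs_of_pos (Real.exp_pos _)] at this
      simpa [hX, add_sub_add_right_eq_sub] using this
    have hEY : Real.exp Y ≤ K * Real.exp (-γ * (t - s)) := by
      have := hdich s t hst
      rwa [abs_of_pos (Real.exp_pos _)] at this
    calc |Real.exp X - Real.exp Y| ≤ |X - Y| * max (Real.exp X) (Real.exp Y) :=
          exp_sub_exp_abs_le X Y
      _ ≤ (δ * (t - s)) * (K * Real.exp (-γ * (t - s))) :=
          mul_le_mul hXY (max_le hEX hEY) (le_max_of_le_left (Real.exp_pos _).le) (mul_nonneg hδ0 (by linarith))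
      _ = K * δ * ((t - s) * Real.exp (-γ * (t - s))) := by ring
  -- integral bound
  have hbound : ∀ t : ℝ, (∫ s in Set.Iic t,
      |Real.exp (∫ r in (s + τ)..(t + τ), a r) - Real.exp (∫ r in s..t, a r)|) ≤ ε := by
    intro t
    obtain ⟨hInt, hVal⟩ := aux_integrable_and_integral hγ t
    have hmono : (∫ s in Set.Iic t,
        |Real.exp (∫ r in (s + τ)..(t + τ), a r) - Real.exp (∫ r in s..t, a r)|) ≤
        ∫ s in Set.Iic t, K * δ * ((t - s) * Real.exp (-γ * (t - s))) := by
      refine MeasureTheory.integral_mono_of_nonneg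
        (Filter.Eventually.of_forall fun s => abs_nonneg _)
        (hInt.const_mul (K * δ)) ?_
      filter_upwards [MeasureTheory.ae_restrict_mem measurableSet_Iic] with s hs
      exact key t s hs
    have hval2 : (∫ s in Set.Iic t, K * δ * ((t - s) * Real.exp (-γ * (t - s))))
        = K * δ * (1 / γ ^ 2) := by
      rw [MeasureTheory.integral_const_mul, hVal]
    refine hmono.trans ?_
    rw [hval2, hδdef]
    have hKne : K ≠ 0 := ne_of_gt hK0
    have hγne : γ ≠ 0 := ne_of_gt hγ
    have heq : K * (ε * γ ^ 2 / K ^ 2) * (1 / γ ^ 2) = ε / K := by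
      field_simp
    rw [heq]
    exact div_le_self hε.le hK
  refine limsup_le_of_le ?_ (Filter.Eventually.of_forall hbound)
  exact isCoboundedUnder_le_of_le atTop
    (fun t => MeasureTheory.integral_nonneg fun s => abs_nonneg _)
end
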